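/- Let G = (V, E) be a directed acyclic graph defining a linear influence instance with thresholds i.i.d. Uniform[0,1], let s ∈ V be a source (in-degree 0), and let x ∈ [0,1]^V satisfy x_v + w_{sv} ≤ 1 for every out-neighbor v of s. Let Ĝ = G − s (G with s and its incident edges removed), let x̂ be the restriction of x to V∖{s}, and let ŷ ∈ [0,1]^{V∖{s}} be defined by ŷ_v = w_{sv} if v is an out-neighbor of s and ŷ_v = 0 otherwise. Then σ_G(x) = (1 − x_s)·σ_{Ĝ}(x̂) + x_s·(1 + σ_{Ĝ}(x̂ + ŷ)), where σ_G and σ_{Ĝ} denote the expected final activated set sizes in G and Ĝ respectively. -/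

import Mathlib

/-! The source `s` has no in-edges, so it ends up active iff `θ s ≤ x s`, and if so it is active
from the first round on. Given the state of `s`, the process restricted to `V ∖ {s}` is the process
on `G - s` in which each out-neighbour `v` of `s` receives the extra direct influence `w s v` when
`s` is active. Since `θ s` is uniform on `[0, 1]` and independent of the other thresholds,
integrating over `θ s` first splits `σ_G(x)` into the two terms, weighted by `x s` and `1 - x s`. -/

open MeasureTheory Finset
open scoped Classical

/-- The final activated set of the linear influence process on a weighted digraph
with weights `wt`, thresholds `θ` and direct influences `x`: starting from `∅`, a
vertex `v` activates once the total weight of edges from the active set into `v`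
plus `x v` reaches `θ v`; the process runs for `|W|` rounds. -/
noncomputable def finalSet {W : Type*} [Fintype W] (wt : W → W → ℝ) (θ x : W → ℝ) :
    Finset W :=
  (fun S => S ∪ Finset.univ.filter (fun v => θ v ≤ (∑ u ∈ S, wt u v) + x v))^[Fintype.card W] ∅

/-- The expected size of the final activated set of the linear influence process,
the thresholds being i.i.d. `Uniform [0,1]`. -/
noncomputable def sigmaLin {W : Type*} [Fintype W] (wt : W → W → ℝ) (x : W → ℝ) : ℝ :=
  ∫ θ : W → ℝ, ((finalSet wt θ x).card : ℝ)
    ∂(Measure.pi fun _ : W => volume.restrict (Set.Icc 0 1))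

lemma Finset.iterate_card_isFixedPt {α : Type*} [Fintype α] {f : Finset α → Finset α}
    (hf : ∀ S, S ⊆ f S) : f (f^[Fintype.card α] ∅) = f^[Fintype.card α] ∅ := by
  set n := Fintype.card α
  -- Otherwise the first `n + 2` iterates form a strictly increasing chain in `Finset α`.
  by_contra hne
  have hstrict : ∀ k ≤ n, f^[k] ∅ ⊂ f^[k + 1] ∅ := by
    intro k hk
    rw [Function.iterate_succ_apply']
    refine (hf _).ssubset_of_ne fun hfix => hne ?_
    have hstable := Function.iterate_fixed hfix.symm (n - k)
    rw [← Function.iterate_add_apply, Nat.sub_add_cancel hk] at hstable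
    rw [hstable, ← hfix]
  have hcard : ∀ k ≤ n + 1, k ≤ (f^[k] ∅).card := by
    intro k hk
    induction k with
    | zero => exact Nat.zero_le _
    | succ k ih =>
      have := ih (by omega)
      have := card_lt_card (hstrict k (by omega))
      omega
  have := hcard (n + 1) le_rfl
  have := card_le_univ (f^[n + 1] ∅)
  omega

section Activation

variable {W : Type*} [Fintype W] {wt : W → W → ℝ} {θ x : W → ℝ}

variable (wt θ x) in
noncomputable def activationStep (S : Finset W) : Finset W :=
  S ∪ univ.filter fun v => θ v ≤ (∑ u ∈ S, wt u v) + x v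

lemma mem_activationStep {S : Finset W} {v : W} :
    v ∈ activationStep wt θ x S ↔ v ∈ S ∨ θ v ≤ (∑ u ∈ S, wt u v) + x v := by
  simp [activationStep]

lemma subset_activationStep (S : Finset W) : S ⊆ activationStep wt θ x S :=
  subset_union_left

lemma activationStep_mono (hw0 : ∀ u v, 0 ≤ wt u v) {S T : Finset W} (h : S ⊆ T) :
    activationStep wt θ x S ⊆ activationStep wt θ x T := by
  intro v hv
  refine mem_activationStep.2 ((mem_activationStep.1 hv).imp (@h v) fun hθ => hθ.trans ?_)
  gcongr
  exact fun u _ _ => hw0 u v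

lemma activationStep_finalSet : activationStep wt θ x (finalSet wt θ x) = finalSet wt θ x :=
  iterate_card_isFixedPt subset_activationStep

lemma mem_finalSet_of_le (v : W) (hv : θ v ≤ (∑ u ∈ finalSet wt θ x, wt u v) + x v) :
    v ∈ finalSet wt θ x := by
  rw [← activationStep_finalSet]
  exact mem_activationStep.2 (Or.inr hv)

lemma finalSet_subset (hw0 : ∀ u v, 0 ≤ wt u v) {T : Finset W}
    (hT : activationStep wt θ x T ⊆ T) : finalSet wt θ x ⊆ T := by
  change (activationStep wt θ x)^[Fintype.card W] ∅ ⊆ T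
  induction Fintype.card W with
  | zero => exact empty_subset T
  | succ n ih =>
    rw [Function.iterate_succ_apply']
    exact (activationStep_mono hw0 ih).trans hT

end Activation

lemma Finset.sum_eq_sum_subtype_ne_add {α M : Type*} [DecidableEq α] [AddCommMonoid M]
    (T : Finset α) (a : α) (g : α → M) :
    ∑ u ∈ T, g u = ∑ u ∈ T.subtype (· ≠ a), g u + if a ∈ T then g a else 0 := by
  rw [sum_subtype_eq_sum_filter, filter_ne']
  split_ifs with ha
  · exact (sum_erase_add T g ha).symm
  · rw [erase_eq_of_notMem ha, add_zero]

section SourceRemoval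

variable {V : Type*} [Fintype V] [DecidableEq V] {w : V → V → ℝ} {s : V} {θ x : V → ℝ}

lemma mem_finalSet_source_iff (hw0 : ∀ u v, 0 ≤ w u v) (hs : ∀ u, w u s = 0) :
    s ∈ finalSet w θ x ↔ θ s ≤ x s := by
  have hsum (T : Finset V) : ∑ u ∈ T, w u s = 0 := sum_eq_zero fun u _ => hs u
  refine ⟨fun hmem => ?_, fun hθ => mem_finalSet_of_le s (by rw [hsum, zero_add]; exact hθ)⟩
  by_contra! hθ
  suffices finalSet w θ x ⊆ univ.erase s from notMem_erase s univ (this hmem)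
  refine finalSet_subset hw0 fun v hv => ?_
  rcases mem_activationStep.1 hv with hv | hv
  · exact hv
  · refine mem_erase.2 ⟨?_, mem_univ v⟩
    rintro rfl
    rw [hsum, zero_add] at hv
    exact hθ.not_ge hv

theorem finalSet_subtype_ne_source (hw0 : ∀ u v, 0 ≤ w u v) (hs : ∀ u, w u s = 0) :
    (finalSet w θ x).subtype (· ≠ s) =
      finalSet (fun u v : {a : V // a ≠ s} => w u v) (fun v => θ v)
        (fun v => x v + if θ s ≤ x s then w s v else 0) := by
  set T := finalSet w θ x
  set S := finalSet (fun u v : {a : V // a ≠ s} => w u v) (fun v => θ v)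
    (fun v => x v + if θ s ≤ x s then w s v else 0)
  have hsum (R : Finset V) (hR : s ∈ R ↔ θ s ≤ x s) (v : {a : V // a ≠ s}) :
      ∑ u ∈ R, w u v + x v =
        ∑ u ∈ R.subtype (· ≠ s), w u v + (x v + if θ s ≤ x s then w s v else 0) := by
    rw [sum_eq_sum_subtype_ne_add R s]
    simp only [hR]
    ring
  have hT : s ∈ T ↔ θ s ≤ x s := mem_finalSet_source_iff hw0 hs
  apply Subset.antisymm
  · set X := univ.filter fun v => if h : v = s then θ s ≤ x s else ⟨v, h⟩ ∈ S
    have hXS : X.subtype (· ≠ s) = S := by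
      ext v
      simp [X, v.2]
    have hX : s ∈ X ↔ θ s ≤ x s := by simp [X]
    rw [← hXS]
    refine subtype_mono (finalSet_subset hw0 fun v hv => ?_)
    rcases mem_activationStep.1 hv with hv | hv
    · exact hv
    by_cases hvs : v = s
    · subst hvs
      rw [sum_eq_zero fun u _ => hs u, zero_add] at hv
      exact hX.2 hv
    · lift v to {a : V // a ≠ s} using hvs
      rw [hsum X hX, hXS] at hv
      simpa [X, v.2] using mem_finalSet_of_le v hv
  · refine finalSet_subset (fun (u v : {a : V // a ≠ s}) => hw0 u v) fun v hv => ?_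
    rcases mem_activationStep.1 hv with hv | hv
    · exact hv
    · rw [← hsum T hT] at hv
      exact mem_subtype.2 (mem_finalSet_of_le (v : V) hv)

lemma card_finalSet_eq_of_source (hw0 : ∀ u v, 0 ≤ w u v) (hs : ∀ u, w u s = 0) :
    ((finalSet w θ x).card : ℝ) =
      (if θ s ≤ x s then 1 else 0) +
        (finalSet (fun u v : {a : V // a ≠ s} => w u v) (fun v => θ v)
          (fun v => x v + if θ s ≤ x s then w s v else 0)).card := by
  rw [card_eq_sum_ones, sum_eq_sum_subtype_ne_add _ s, ← card_eq_sum_ones,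
    finalSet_subtype_ne_source hw0 hs]
  simp only [mem_finalSet_source_iff hw0 hs]
  push_cast
  ring

end SourceRemoval

lemma Finset.measurable_sum_of_measurableSet_mem {α ι : Type*} [MeasurableSpace α] [Fintype ι]
    [DecidableEq ι] {A : α → Finset ι} (hA : ∀ i, MeasurableSet {a | i ∈ A a}) (f : ι → ℝ) :
    Measurable fun a => ∑ i ∈ A a, f i := by
  have hA' (a : α) : ∑ i ∈ A a, f i = ∑ i, if i ∈ A a then f i else 0 :=
    (sum_ite_mem_eq (A a) f).symm
  simp only [hA']
  exact measurable_sum _ fun i _ => Measurable.ite (hA i) measurable_const measurable_const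

section Measurability

variable {W : Type*} [Fintype W] (wt : W → W → ℝ) (x : W → ℝ)

lemma measurableSet_mem_iterate_activationStep (k : ℕ) (v : W) :
    MeasurableSet {θ : W → ℝ | v ∈ (activationStep wt θ x)^[k] ∅} := by
  induction k generalizing v with
  | zero => simp
  | succ k ih =>
    simp only [Function.iterate_succ_apply', mem_activationStep, Set.ofPred_or]
    exact (ih v).union <| measurableSet_le (measurable_pi_apply v) <|
      (measurable_sum_of_measurableSet_mem ih _).add_const _

lemma measurable_card_finalSet : Measurable fun θ : W → ℝ => ((finalSet wt θ x).card : ℝ) := by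
  simp only [cast_card]
  exact measurable_sum_of_measurableSet_mem
    (measurableSet_mem_iterate_activationStep wt x (Fintype.card W)) _

lemma integrable_card_finalSet (μ : Measure (W → ℝ)) [IsFiniteMeasure μ] :
    Integrable (fun θ : W → ℝ => ((finalSet wt θ x).card : ℝ)) μ :=
  .of_bound (measurable_card_finalSet wt x).aestronglyMeasurable (Fintype.card W) <|
    ae_of_all _ fun θ => by simpa using card_le_univ (finalSet wt θ x)

end Measurability

theorem MeasureTheory.integral_pi_eq_integral_integral_funSplitAt {ι α E : Type*} [Fintype ι]
    [DecidableEq ι] [MeasurableSpace α] [NormedAddCommGroup E] [NormedSpace ℝ E]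
    (μ : Measure α) [SigmaFinite μ] (i : ι) {f : (ι → α) → E}
    (hf : Integrable f (Measure.pi fun _ => μ)) :
    ∫ θ, f θ ∂(Measure.pi fun _ => μ) =
      ∫ t, ∫ θ', f ((Equiv.funSplitAt i α).symm (t, θ')) ∂(Measure.pi fun _ => μ) ∂μ := by
  set e := MeasurableEquiv.piEquivPiSubtypeProd (fun _ : ι => α) (· = i)
  have he := (measurePreserving_piEquivPiSubtypeProd (fun _ : ι => μ) (· = i)).symm e
  have hu := measurePreserving_funUnique μ {j // j = i}
  rw [← he.integral_comp' f, integral_prod (fun z => f (e.symm z))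
    ((he.integrable_comp_emb e.symm.measurableEmbedding).2 hf),
    ← hu.integral_comp']
  congr! with a θ'
  ext j
  by_cases h : j = i
  · subst h
    rfl
  · simp [e, h]

instance : IsProbabilityMeasure (volume.restrict (Set.Icc (0 : ℝ) 1)) :=
  ⟨by simp⟩

lemma integral_Icc_ite_le {E : Type*} [NormedAddCommGroup E] [NormedSpace ℝ E] [CompleteSpace E]
    {c : ℝ} (hc : c ∈ Set.Icc (0 : ℝ) 1) (A B : E) :
    ∫ t in Set.Icc (0 : ℝ) 1, (if t ≤ c then A else B) = c • A + (1 - c) • B := by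
  have hind : (fun t : ℝ => if t ≤ c then A else B) =
      fun t => (Set.Iic c).indicator (fun _ => A - B) t + B := by
    ext t
    by_cases ht : t ≤ c <;> simp [ht]
  have hmeas : Set.Iic c ∩ Set.Icc 0 1 = Set.Icc 0 c := by
    ext t
    simp only [Set.mem_inter_iff, Set.mem_Iic, Set.mem_Icc]
    constructor
    · rintro ⟨htc, ht0, -⟩
      exact ⟨ht0, htc⟩
    · rintro ⟨ht0, htc⟩
      exact ⟨htc, ht0, htc.trans hc.2⟩
  rw [hind, integral_add ((integrable_const _).indicator measurableSet_Iic) (integrable_const B),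
    integral_indicator_const _ measurableSet_Iic, integral_const,
    measureReal_restrict_apply measurableSet_Iic, hmeas, measureReal_restrict_apply_univ,
    Real.volume_real_Icc_of_le hc.1, Real.volume_real_Icc_of_le zero_le_one]
  module

theorem stmt11_general {V : Type*} [Fintype V] [DecidableEq V]
    (w : V → V → ℝ) (hw0 : ∀ u v, 0 ≤ w u v)
    (s : V) (hs : ∀ u, w u s = 0)
    (x : V → ℝ) (hx : ∀ v, x v ∈ Set.Icc (0 : ℝ) 1) :
    sigmaLin w x =
      (1 - x s) * sigmaLin (fun u v : {a : V // a ≠ s} => w u.val v.val)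
          (fun v => x v.val)
        + x s * (1 + sigmaLin (fun u v : {a : V // a ≠ s} => w u.val v.val)
          (fun v => x v.val + w s v.val)) := by
  have hinner (t : ℝ) :
      ∫ θ', ((finalSet w ((Equiv.funSplitAt s ℝ).symm (t, θ')) x).card : ℝ)
          ∂(Measure.pi fun _ => volume.restrict (Set.Icc 0 1)) =
        if t ≤ x s then 1 + sigmaLin (fun u v : {a : V // a ≠ s} => w u v)
          (fun v => x v + w s v)
        else sigmaLin (fun u v : {a : V // a ≠ s} => w u v) (fun v => x v) := by
    have hθ (θ' : {a : V // a ≠ s} → ℝ) :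
        (fun v : {a : V // a ≠ s} => (Equiv.funSplitAt s ℝ).symm (t, θ') v) = θ' := by
      ext v
      simp [v.2]
    have hθs (θ' : {a : V // a ≠ s} → ℝ) : (Equiv.funSplitAt s ℝ).symm (t, θ') s = t := by simp
    simp only [card_finalSet_eq_of_source hw0 hs, hθs, hθ]
    split_ifs with ht
    · rw [integral_add (integrable_const 1) (integrable_card_finalSet _ _ _)]
      simp [sigmaLin]
    · simp [sigmaLin]
  rw [sigmaLin, integral_pi_eq_integral_integral_funSplitAt _ s (integrable_card_finalSet w x _),
    integral_congr_ae (ae_of_all _ hinner), integral_Icc_ite_le (hx s)]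
  simp only [smul_eq_mul]
  ring

/-- Removing a source `s` from a DAG: if `x v + w s v ≤ 1` for every out-neighbor
`v` of `s`, then `σ_G(x) = (1 - x_s) σ_Ĝ(x̂) + x_s (1 + σ_Ĝ(x̂ + ŷ))`, where `Ĝ = G - s`,
`x̂` is the restriction of `x`, and `ŷ_v = w s v`. -/
theorem stmt11 {V : Type*} [Fintype V] [DecidableEq V]
    (w : V → V → ℝ) (hw0 : ∀ u v, 0 ≤ w u v) (hw1 : ∀ v, (∑ u, w u v) ≤ 1)
    (r : V → ℕ) (hdag : ∀ u v, w u v ≠ 0 → r u < r v)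
    (s : V) (hs : ∀ u, w u s = 0)
    (x : V → ℝ) (hx : ∀ v, x v ∈ Set.Icc (0 : ℝ) 1)
    (hcap : ∀ v, v ≠ s → x v + w s v ≤ 1) :
    sigmaLin w x =
      (1 - x s) * sigmaLin (fun u v : {a : V // a ≠ s} => w u.val v.val)
          (fun v => x v.val)
        + x s * (1 + sigmaLin (fun u v : {a : V // a ≠ s} => w u.val v.val)
          (fun v => x v.val + w s v.val)) :=
  stmt11_general w hw0 s hs x hx
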